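/- arXiv:2511.03461 — 7 statements merged into one kernel-verified Lean document; each statement's English description precedes it below -/
import Mathlib

section
/- Let G be a hypergraph, let A ⊆ E(G) be a well-linked set of hyperedges, and let B ⊆ E(G) be arbitrary. Then λ(B ∪ A) ≤ λ(B) or λ(B \ A) ≤ λ(B). -/
open scoped Classical

namespace Paper

variable {V : Type} {E : Type}

/-- Vertices covered by a set of hyperedges. -/
noncomputable def Vs (F : E → Finset V) (A : Finset E) : Finset V := A.biUnion F

/-- Boundary of `A` relative to a ground set of hyperedges. -/
noncomputable def bdIn (F : E → Finset V) (ground A : Finset E) : Finset V :=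
  Vs F A ∩ Vs F (ground \ A)

/-- Boundary size. -/
noncomputable def lamIn (F : E → Finset V) (ground A : Finset E) : ℕ :=
  (bdIn F ground A).card

/-- Interior. -/
noncomputable def intIn (F : E → Finset V) (ground A : Finset E) : Finset V :=
  Vs F A \ bdIn F ground A

/-- A set of hyperedges is well-linked. -/
def WellLinkedIn (F : E → Finset V) (ground A : Finset E) : Prop :=
  ∀ A1 A2 : Finset E, A1 ∪ A2 = A → A1 ∩ A2 = ∅ →
    lamIn F ground A ≤ lamIn F ground A1 ∨ lamIn F ground A ≤ lamIn F ground A2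

/-- A nonempty set of hyperedges is internally connected. -/
def InternallyConnectedIn (F : E → Finset V) (ground A : Finset E) : Prop :=
  A.Nonempty ∧ ¬ ∃ B1 B2 : Finset E, B1 ∪ B2 = A ∧ B1 ∩ B2 = ∅ ∧
    B1.Nonempty ∧ B2.Nonempty ∧
    bdIn F ground B1 ⊆ bdIn F ground A ∧ bdIn F ground B2 ⊆ bdIn F ground A

/-- Internal component: an inclusion-maximal internally connected subset. -/
def InternalComponentIn (F : E → Finset V) (ground B B' : Finset E) : Prop :=
  B' ⊆ B ∧ InternallyConnectedIn F ground B' ∧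
    ∀ B'' : Finset E, B' ⊆ B'' → B'' ⊆ B → InternallyConnectedIn F ground B'' → B'' = B'

/-- A tree decomposition of the graph with adjacency `Adj` induced on vertex set `s`. -/
structure TreeDecompOn (Adj : V → V → Prop) (s : Finset V) where
  ι : Type
  fin : Fintype ι
  tr : SimpleGraph ι
  isTree : tr.IsTree
  bag : ι → Finset V
  bag_sub : ∀ i, bag i ⊆ s
  cover_v : ∀ v ∈ s, ∃ i, v ∈ bag i
  cover_e : ∀ u ∈ s, ∀ v ∈ s, Adj u v → ∃ i, u ∈ bag i ∧ v ∈ bag i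
  conn : ∀ v ∈ s, (tr.induce {i | v ∈ bag i}).Connected

/-- Treewidth (an integer, `-1` for the empty graph) of the graph
with adjacency `Adj` induced on the vertex set `s`. -/
noncomputable def tw (Adj : V → V → Prop) (s : Finset V) : ℤ :=
  sInf {k : ℤ | ∃ D : TreeDecompOn Adj s, ∀ i, ((D.bag i).card : ℤ) ≤ k + 1}

/-- Minimum size of a treewidth-`η`-modulator of the graph induced on `s`. -/
noncomputable def twmodOn (Adj : V → V → Prop) (s : Finset V) (η : ℕ) : ℕ :=
  sInf {n : ℕ | ∃ X : Finset V, X ⊆ s ∧ X.card ≤ n ∧ tw Adj (s \ X) ≤ (η : ℤ)}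

/-- Adjacency of the primal graph of a hypergraph. -/
def primalAdj (F : E → Finset V) : V → V → Prop :=
  fun u v => u ≠ v ∧ ∃ e : E, u ∈ F e ∧ v ∈ F e

/-- Internal treewidth of a set of hyperedges. -/
noncomputable def itw [Fintype E] (F : E → Finset V) (A : Finset E) : ℤ :=
  tw (primalAdj F) (intIn F Finset.univ A)

/-- The hypergraph given by `F` is (isomorphic to) the support hypergraph of `G`:
it has exactly one hyperedge `{v}` for each vertex `v` and exactly one hyperedge
`{u, v}` for each edge `uv`, and no other hyperedges. -/
def IsSupport (G : SimpleGraph V) (F : E → Finset V) : Prop :=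
  (∀ e : E, (∃ v : V, F e = {v}) ∨ (∃ u v : V, G.Adj u v ∧ F e = {u, v})) ∧
  (∀ v : V, ∃! e : E, F e = {v}) ∧
  (∀ u v : V, G.Adj u v → ∃! e : E, F e = ({u, v} : Finset V))

/-- `H` is a topological minor of `G` using only vertices in `s`. -/
def IsTopMinorOn {α β : Type} (H : SimpleGraph α) (G : SimpleGraph β) (s : Set β) : Prop :=
  ∃ φ : α → β, (∀ a, φ a ∈ s) ∧ Function.Injective φ ∧
    ∃ P : ∀ u v : α, H.Adj u v → G.Walk (φ u) (φ v),
      (∀ u v (h : H.Adj u v), (P u v h).IsPath) ∧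
      (∀ u v (h : H.Adj u v), ∀ w ∈ (P u v h).support, w ∈ s) ∧
      (∀ u v (h : H.Adj u v) (w : β), w ∈ (P u v h).support → w ≠ φ u → w ≠ φ v →
        ∀ a : α, φ a ≠ w) ∧
      (∀ u v u' v' (h : H.Adj u v) (h' : H.Adj u' v'),
        (s(u, v) : Sym2 α) ≠ s(u', v') →
        ∀ w : β, w ∈ (P u v h).support → w ∈ (P u' v' h').support → w = φ u ∨ w = φ v)

/-- `H` is a topological minor of `G`. -/
def IsTopMinor {α β : Type} (H : SimpleGraph α) (G : SimpleGraph β) : Prop :=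
  IsTopMinorOn H G Set.univ

/-- A rooted superbranch decomposition of a hypergraph with hyperedge type `E`:
a finite rooted tree (given by a parent map) whose leaves are in bijection with `E`
and in which every non-leaf node has at least two children. -/
structure SBD (E : Type) [Fintype E] where
  ι : Type
  fin : Fintype ι
  root : ι
  par : ι → ι
  par_root : par root = root
  reach : ∀ i : ι, ∃ n : ℕ, par^[n] i = root
  leafMap : E → ι
  inj : Function.Injective leafMap
  map_leaf : ∀ (e : E) (j : ι), par j = leafMap e → j = leafMap e
  leaf_surj : ∀ i : ι, (∀ j : ι, par j = i → j = i) → ∃ e : E, leafMap e = i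
  branch : ∀ i : ι, (∃ j : ι, par j = i ∧ j ≠ i) → 2 ≤ {j : ι | par j = i ∧ j ≠ i}.ncard

/-- The set `L[t]` of hyperedges assigned to leaves below `t`. -/
noncomputable def SBD.Lset [Fintype E] (T : SBD E) (t : T.ι) : Finset E :=
  Finset.univ.filter fun e => ∃ n : ℕ, T.par^[n] (T.leafMap e) = t

/-- The children of the root. -/
noncomputable def SBD.chd [Fintype E] (T : SBD E) : Finset T.ι :=
  letI := T.fin
  Finset.univ.filter fun j => T.par j = T.root ∧ j ≠ T.root

/-- The vertex sets of the hyperedges of the torso of the root: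
the hyperedge corresponding to a child `t` has vertex set `bd(L[t])`. -/
noncomputable def SBD.Ft [Fintype E] (T : SBD E) (F : E → Finset V) : T.ι → Finset V :=
  fun t => bdIn F Finset.univ (T.Lset t)

/-- Downwards well-linkedness of a superbranch decomposition. -/
def DownWL [Fintype E] (F : E → Finset V) (T : SBD E) : Prop :=
  ∀ t : T.ι, WellLinkedIn F Finset.univ (T.Lset t)

/-- The adhesion size of the superbranch decomposition is at most `α`. -/
def AdhLE [Fintype E] (F : E → Finset V) (T : SBD E) (α : ℕ) : Prop :=
  ∀ t : T.ι, t ≠ T.root → lamIn F Finset.univ (T.Lset t) ≤ α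

/-- A rooted tree decomposition (given by a root and a tree decomposition). -/
structure RTreeDecompOn (Adj : V → V → Prop) (s : Finset V) extends TreeDecompOn Adj s where
  root : ι

/-- A `(k, c)`-protrusion decomposition exists. -/
def HasProtrusionDecomp (Adj : V → V → Prop) (s : Finset V) (k : ℝ) (c : ℕ) : Prop :=
  ∃ D : RTreeDecompOn Adj s,
    ((D.bag D.root).card : ℝ) ≤ k ∧
    ((D.tr.neighborSet D.root).ncard : ℝ) ≤ k ∧
    ∀ i, i ≠ D.root → (D.bag i).card ≤ c

/-- A finite simple graph on the vertex universe `ℕ`. -/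
structure FGraph where
  verts : Finset ℕ
  Adj : ℕ → ℕ → Prop
  symm : ∀ u v, Adj u v → Adj v u
  loopless : ∀ u, ¬ Adj u u
  supp : ∀ u v, Adj u v → u ∈ verts ∧ v ∈ verts

/-- The `SimpleGraph` of an `FGraph`. -/
def FGraph.toSG (G : FGraph) : SimpleGraph ℕ where
  Adj := G.Adj
  symm := ⟨fun u v h => G.symm u v h⟩
  loopless := ⟨fun u h => G.loopless u h⟩

/-- A rooted tree decomposition, with the rooted tree given by a parent map and
connectivity phrased for rooted trees. -/
structure RootedTD (Adj : V → V → Prop) (s : Finset V) where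
  ι : Type
  fin : Fintype ι
  root : ι
  par : ι → ι
  par_root : par root = root
  reach : ∀ i : ι, ∃ n : ℕ, par^[n] i = root
  bag : ι → Finset V
  bag_sub : ∀ i, bag i ⊆ s
  cover_v : ∀ v ∈ s, ∃ i, v ∈ bag i
  cover_e : ∀ u ∈ s, ∀ v ∈ s, Adj u v → ∃ i, u ∈ bag i ∧ v ∈ bag i
  conn : ∀ v ∈ s, ∃ m : ι, v ∈ bag m ∧ ∀ i : ι, v ∈ bag i →
    ∃ n : ℕ, par^[n] i = m ∧ ∀ l ≤ n, v ∈ bag (par^[l] i)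


/-! Split `A` along `B` into `A \ B` and `A ∩ B`; well-linkedness makes one part's boundary
at least `λ(A)`. The boundary function is submodular and posimodular, and applying the matching
inequality to `B` and `A` moves that excess over to `B ∪ A` or `B \ A`. -/

lemma card_add_card_le_of_union_subset_of_inter_subset {α : Type*} [DecidableEq α]
    {S T P Q : Finset α} (hunion : S ∪ T ⊆ P ∪ Q) (hinter : S ∩ T ⊆ P ∩ Q) :
    S.card + T.card ≤ P.card + Q.card := by
  rw [← Finset.card_union_add_card_inter S T, ← Finset.card_union_add_card_inter P Q]
  exact add_le_add (Finset.card_le_card hunion) (Finset.card_le_card hinter)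

section Boundary

variable [Fintype E] {F : E → Finset V}

lemma mem_bdIn_univ {A : Finset E} {v : V} :
    v ∈ bdIn F Finset.univ A ↔ (∃ e ∈ A, v ∈ F e) ∧ ∃ e ∉ A, v ∈ F e := by
  simp [bdIn, Vs]

variable (F) (X Y : Finset E)

lemma lamIn_union_add_lamIn_inter_le :
    lamIn F Finset.univ (X ∪ Y) + lamIn F Finset.univ (X ∩ Y) ≤
      lamIn F Finset.univ X + lamIn F Finset.univ Y := by
  refine card_add_card_le_of_union_subset_of_inter_subset ?_ ?_ <;>
    intro v <;>
    simp only [Finset.mem_union, Finset.mem_inter, mem_bdIn_univ] <;>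
    grind

lemma lamIn_sdiff_add_lamIn_sdiff_le :
    lamIn F Finset.univ (X \ Y) + lamIn F Finset.univ (Y \ X) ≤
      lamIn F Finset.univ X + lamIn F Finset.univ Y := by
  refine card_add_card_le_of_union_subset_of_inter_subset ?_ ?_ <;>
    intro v <;>
    simp only [Finset.mem_union, Finset.mem_inter, Finset.mem_sdiff, mem_bdIn_univ] <;>
    grind

end Boundary

theorem statement0_general {V E : Type} [Fintype E] (F : E → Finset V)
    (A B : Finset E) (hA : WellLinkedIn F Finset.univ A) :
    lamIn F Finset.univ (B ∪ A) ≤ lamIn F Finset.univ B ∨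
      lamIn F Finset.univ (B \ A) ≤ lamIn F Finset.univ B := by
  rcases hA (A \ B) (A ∩ B) (Finset.sdiff_union_inter A B)
      (Finset.disjoint_iff_inter_eq_empty.mp (Finset.disjoint_sdiff_inter A B))
    with hle | hle
  · right
    have hposimod := lamIn_sdiff_add_lamIn_sdiff_le F B A
    omega
  · left
    have hsubmod := lamIn_union_add_lamIn_inter_le F B A
    rw [Finset.inter_comm] at hsubmod
    omega

/-- uncrossing lemma. -/
theorem statement0 {V E : Type} [Fintype V] [Fintype E] (F : E → Finset V)
    (A B : Finset E) (hA : WellLinkedIn F Finset.univ A) :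
    lamIn F Finset.univ (B ∪ A) ≤ lamIn F Finset.univ B ∨
      lamIn F Finset.univ (B \ A) ≤ lamIn F Finset.univ B :=
  statement0_general F A B hA

end Paper
end

section
/- Let G be a hypergraph, let A ⊆ E(G) be internally connected, and let B ⊆ E(G). If bd(B) ∩ int(A) = ∅ and A ∩ B ≠ ∅, then A ⊆ B. -/
open scoped Classical

namespace Paper

variable {V : Type} {E : Type}

section Boundary

variable (F : E → Finset V) (ground : Finset E)

/-- A vertex on the boundary of `A ∩ C` but not of `A` lies in the interior of `A`, and it is
seen both by an edge of `A ∩ C` and by an edge of `A \ C`, so it lies on the boundary of `C`. -/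
theorem bdIn_inter_subset (A C : Finset E) :
    bdIn F ground (A ∩ C) ⊆ bdIn F ground A ∪ (bdIn F ground C ∩ intIn F ground A) := by
  intro v hv
  simp only [bdIn, intIn, Vs, Finset.mem_union, Finset.mem_inter, Finset.mem_sdiff,
    Finset.mem_biUnion] at hv ⊢
  obtain ⟨⟨e₁, ⟨he₁A, he₁C⟩, hve₁⟩, e₂, ⟨he₂g, he₂AC⟩, hve₂⟩ := hv
  by_cases hbd : ∃ e, (e ∈ ground ∧ e ∉ A) ∧ v ∈ F e
  · obtain ⟨e, ⟨heg, heA⟩, hve⟩ := hbd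
    exact Or.inl ⟨⟨e₁, he₁A, hve₁⟩, e, ⟨heg, heA⟩, hve⟩
  · have he₂A : e₂ ∈ A := by_contra fun h => hbd ⟨e₂, ⟨he₂g, h⟩, hve₂⟩
    refine Or.inr ⟨⟨⟨e₁, he₁C, hve₁⟩, e₂, ⟨he₂g, fun h => he₂AC ⟨he₂A, h⟩⟩, hve₂⟩,
      ⟨e₁, he₁A, hve₁⟩, ?_⟩
    rintro ⟨-, e, ⟨heg, heA⟩, hve⟩
    exact hbd ⟨e, ⟨heg, heA⟩, hve⟩

theorem bdIn_sdiff_subset (C : Finset E) : bdIn F ground (ground \ C) ⊆ bdIn F ground C := by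
  rw [bdIn, bdIn, Finset.sdiff_sdiff_self_left, Finset.inter_comm]
  exact Finset.inter_subset_inter (Finset.biUnion_subset_biUnion_of_subset_left _
    Finset.inter_subset_right) le_rfl

variable {F ground}

theorem bdIn_inter_subset_of_inter_intIn_eq_empty {A C : Finset E}
    (h : bdIn F ground C ∩ intIn F ground A = ∅) :
    bdIn F ground (A ∩ C) ⊆ bdIn F ground A := by
  simpa [h] using bdIn_inter_subset F ground A C

end Boundary

theorem statement2_general {V E : Type} [Fintype E] (F : E → Finset V)
    (A B : Finset E) (hA : InternallyConnectedIn F Finset.univ A)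
    (hdisj : bdIn F Finset.univ B ∩ intIn F Finset.univ A = ∅)
    (hmeet : (A ∩ B).Nonempty) :
    A ⊆ B := by
  by_contra hAB
  obtain ⟨e, heA, heB⟩ := Finset.not_subset.1 hAB
  have hdisj_compl : bdIn F Finset.univ (Finset.univ \ B) ∩ intIn F Finset.univ A = ∅ :=
    Finset.subset_empty.1 <| hdisj ▸ Finset.inter_subset_inter_right (bdIn_sdiff_subset F _ B)
  refine hA.2 ⟨A ∩ B, A ∩ (Finset.univ \ B), ?_, ?_, hmeet, ⟨e, by simp [heA, heB]⟩,
    bdIn_inter_subset_of_inter_intIn_eq_empty hdisj,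
    bdIn_inter_subset_of_inter_intIn_eq_empty hdisj_compl⟩
  · rw [← Finset.inter_union_distrib_left, Finset.union_sdiff_of_subset (Finset.subset_univ B),
      Finset.inter_univ]
  · ext; simp only [Finset.mem_inter, Finset.mem_sdiff, Finset.notMem_empty]; tauto

/-- an internally connected set not crossing the boundary of `B`
and intersecting `B` is contained in `B`. -/
theorem statement2 {V E : Type} [Fintype V] [Fintype E] (F : E → Finset V)
    (A B : Finset E) (hA : InternallyConnectedIn F Finset.univ A)
    (hdisj : bdIn F Finset.univ B ∩ intIn F Finset.univ A = ∅)
    (hmeet : (A ∩ B).Nonempty) :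
    A ⊆ B :=
  statement2_general F A B hA hdisj hmeet

end Paper
end

section
/- For every hypergraph G and every set B ⊆ E(G), there exists a partition of B into at most 2^{λ(B)} parts, each of which is well-linked in G. -/
open scoped Classical

/-! If `B` is not well-linked, the witnessing bipartition splits it into two parts whose boundaries
are strictly smaller than `λ(B)`. Recursing on both parts gives a binary recursion tree of depth at
most `λ(B)` whose leaves are well-linked, hence at most `2 ^ λ(B)` of them. -/

namespace Finpartition

variable {α : Type*} [DistribLattice α] [OrderBot α] [DecidableEq α] {a b : α}

@[simps parts]
def union (P : Finpartition a) (Q : Finpartition b) (hab : Disjoint a b) :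
    Finpartition (a ⊔ b) where
  parts := P.parts ∪ Q.parts
  supIndep := by
    rw [Finset.supIndep_iff_pairwiseDisjoint, Finset.coe_union, Set.pairwiseDisjoint_union]
    exact ⟨P.disjoint, Q.disjoint, fun x hx y hy _ => hab.mono (P.le hx) (Q.le hy)⟩
  sup_parts := by rw [Finset.sup_union, P.sup_parts, Q.sup_parts]
  bot_notMem h := (Finset.mem_union.1 h).elim P.bot_notMem Q.bot_notMem

end Finpartition

namespace Paper

variable {V E : Type}

open Finset

lemma exists_split_of_not_wellLinkedIn {F : E → Finset V} {ground B : Finset E}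
    (h : ¬ WellLinkedIn F ground B) :
    ∃ A₁ A₂ : Finset E, A₁ ∪ A₂ = B ∧ Disjoint A₁ A₂ ∧
      lamIn F ground A₁ < lamIn F ground B ∧ lamIn F ground A₂ < lamIn F ground B := by
  unfold WellLinkedIn at h
  push Not at h
  obtain ⟨A₁, A₂, hunion, hinter, h₁, h₂⟩ := h
  exact ⟨A₁, A₂, hunion, disjoint_iff_inter_eq_empty.2 hinter, h₁, h₂⟩

theorem exists_finpartition_wellLinkedIn (F : E → Finset V) (ground B : Finset E) :
    ∃ P : Finpartition B, #P.parts ≤ 2 ^ lamIn F ground B ∧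
      ∀ X ∈ P.parts, WellLinkedIn F ground X := by
  induction hn : lamIn F ground B using Nat.strong_induction_on generalizing B with
  | _ n ih =>
  by_cases hB : WellLinkedIn F ground B
  · refine ⟨⊤, ?_, fun X hX => ?_⟩
    · exact (card_le_card (Finpartition.parts_top_subset B)).trans (by simp [Nat.one_le_two_pow])
    · rwa [mem_singleton.1 (Finpartition.parts_top_subset B hX)]
  obtain ⟨A₁, A₂, hunion, hdisj, h₁, h₂⟩ := exists_split_of_not_wellLinkedIn hB
  obtain ⟨P₁, hcard₁, hwl₁⟩ := ih _ (hn ▸ h₁) A₁ rfl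
  obtain ⟨P₂, hcard₂, hwl₂⟩ := ih _ (hn ▸ h₂) A₂ rfl
  obtain ⟨k, rfl⟩ : ∃ k, n = k + 1 := Nat.exists_eq_add_one_of_ne_zero (by omega)
  refine ⟨(P₁.union P₂ hdisj).copy hunion, ?_, ?_⟩
  · calc #(P₁.parts ∪ P₂.parts) ≤ #P₁.parts + #P₂.parts := card_union_le _ _
      _ ≤ 2 ^ k + 2 ^ k := by
        gcongr
        · exact hcard₁.trans (Nat.pow_le_pow_right two_pos (by omega))
        · exact hcard₂.trans (Nat.pow_le_pow_right two_pos (by omega))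
      _ = 2 ^ (k + 1) := by ring
  · simp only [Finpartition.copy_parts, Finpartition.union_parts, mem_union]
    rintro X (hX | hX)
    exacts [hwl₁ X hX, hwl₂ X hX]

theorem statement4_general {V E : Type} [Fintype E] (F : E → Finset V)
    (B : Finset E) :
    ∃ 𝔅 : Finset (Finset E),
      𝔅.card ≤ 2 ^ lamIn F Finset.univ B ∧
      (∀ X ∈ 𝔅, X.Nonempty ∧ X ⊆ B ∧ WellLinkedIn F Finset.univ X) ∧
      (∀ X ∈ 𝔅, ∀ Y ∈ 𝔅, X ≠ Y → Disjoint X Y) ∧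
      𝔅.biUnion id = B := by
  obtain ⟨P, hcard, hwl⟩ := exists_finpartition_wellLinkedIn F Finset.univ B
  exact ⟨P.parts, hcard, fun X hX => ⟨P.nonempty_of_mem_parts hX, P.le hX, hwl X hX⟩,
    fun X hX Y hY hXY => P.disjoint hX hY hXY, P.biUnion_parts⟩

/-- every set `B` of hyperedges can be partitioned into at most
`2 ^ λ(B)` well-linked parts. -/
theorem statement4 {V E : Type} [Fintype V] [Fintype E] (F : E → Finset V)
    (B : Finset E) :
    ∃ 𝔅 : Finset (Finset E),
      𝔅.card ≤ 2 ^ lamIn F Finset.univ B ∧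
      (∀ X ∈ 𝔅, X.Nonempty ∧ X ⊆ B ∧ WellLinkedIn F Finset.univ X) ∧
      (∀ X ∈ 𝔅, ∀ Y ∈ 𝔅, X ≠ Y → Disjoint X Y) ∧
      𝔅.biUnion id = B :=
  statement4_general F B

end Paper
end

section
/- For every graph H there exists a constant c, depending only on H, such that every H-topological-minor-free finite simple graph G contains at most c · |V(G)| cliques, where a clique is a non-empty set of pairwise adjacent vertices. -/
open scoped Classical

/-!
Mader's argument. Suppose every vertex of a finite set `S` has at least `2d > 0` neighbours in
`S`. Take a connected `U ⊆ S` of maximal size with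
`2d (|S \ U| + 1) ≤ 2 e(S \ U) + 2 |∂U|`, where `∂U` is the set of vertices of `S \ U` with a
neighbour in `U`; every single vertex qualifies. If `∂U` is empty, then `S \ U` is a smaller set
of the same minimum degree. Otherwise the maximality of `U` forces every vertex of `∂U` to have at
least `d` neighbours in `∂U`, while any two vertices of `∂U` are joined by a path through `U`.
Inducting on the number of edges of `H`, `H` minus an edge `xy` is realised inside `∂U`, and the
branch vertices of `x` and `y` are then joined through `U`. So minimum degree
`2 ^ e(H) * |V(H)|` forces a subdivision of `H`.

Consequently an `H`-topological-minor-free graph is `D`-degenerate for `D = 2 ^ e(H) * |V(H)|`.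
Removing a vertex `v` of degree `< D`, the cliques through `v` are determined by their traces on
the neighbourhood of `v`, so there are at most `2 ^ D` of them, and `G` has at most
`2 ^ D * |V(G)|` cliques.
-/

namespace SimpleGraph.Walk

variable {β : Type} {G : SimpleGraph β} {a b : β}

noncomputable def orient (W : G.Walk a b) (p q : β) (h : s(p, q) = s(a, b)) : G.Walk p q :=
  if hab : p = a ∧ q = b then W.copy hab.1.symm hab.2.symm
  else
    have hba : p = b ∧ q = a := (Sym2.eq_iff.1 h).resolve_left hab
    W.reverse.copy hba.1.symm hba.2.symm

lemma support_orient_subset (W : G.Walk a b) {p q : β} (h : s(p, q) = s(a, b)) :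
    (W.orient p q h).support ⊆ W.support := by
  unfold orient
  split_ifs <;> simp

lemma IsPath.orient {W : G.Walk a b} (hW : W.IsPath) {p q : β} (h : s(p, q) = s(a, b)) :
    (W.orient p q h).IsPath := by
  unfold Walk.orient
  split_ifs
  · simpa using hW
  · simpa using hW.reverse

end SimpleGraph.Walk

namespace Paper

open Finset SimpleGraph

section TopMinor

variable {α β : Type} {H : SimpleGraph α} {G : SimpleGraph β}

lemma IsTopMinorOn.mono {s t : Set β} (h : IsTopMinorOn H G s) (hst : s ⊆ t) :
    IsTopMinorOn H G t := by
  obtain ⟨φ, hφ, hinj, P, hpath, hsupp, hinner, hdisj⟩ := h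
  exact ⟨φ, fun a => hst (hφ a), hinj, P, hpath, fun u v h w hw => hst (hsupp u v h w hw),
    hinner, hdisj⟩

lemma isTopMinorOn_bot {s : Set β} {φ : α → β} (hφ : ∀ a, φ a ∈ s)
    (hinj : Function.Injective φ) : IsTopMinorOn (⊥ : SimpleGraph α) G s :=
  ⟨φ, hφ, hinj, fun _ _ h => h.elim, fun _ _ h => h.elim, fun _ _ h => h.elim,
    fun _ _ h => h.elim, fun _ _ _ _ h => h.elim⟩

def IsLinkedIn (G : SimpleGraph β) (t s : Set β) : Prop :=
  ∀ p ∈ t, ∀ q ∈ t,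
    ∃ W : G.Walk p q, ∀ w ∈ W.support, w ∈ s ∧ (w ∈ t → w = p ∨ w = q)

lemma IsLinkedIn.mono {s s' t : Set β} (h : IsLinkedIn G t s) (hs : s ⊆ s') :
    IsLinkedIn G t s' :=
  fun p hp q hq => (h p hp q hq).imp fun _ hW w hw => (hW w hw).imp_left (@hs w)

lemma IsTopMinorOn.of_deleteEdges {s t : Set β} {x y : α}
    (h : IsTopMinorOn (H.deleteEdges {s(x, y)}) G t) (hlink : IsLinkedIn G t s) (hts : t ⊆ s) :
    IsTopMinorOn H G s := by
  obtain ⟨φ, hφ, hinj, P, hpath, hsupp, hinner, hdisj⟩ := h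
  obtain ⟨Q, hQpath, hQ⟩ : ∃ Q : G.Walk (φ x) (φ y), Q.IsPath ∧
      ∀ w ∈ Q.support, w ∈ s ∧ (w ∈ t → w = φ x ∨ w = φ y) := by
    obtain ⟨W, hW⟩ := hlink (φ x) (hφ x) (φ y) (hφ y)
    exact ⟨W.toPath, W.toPath.2, fun w hw => hW w (W.support_toPath_subset_support hw)⟩
  have hends : ∀ {u v}, s(u, v) = s(x, y) → s(φ u, φ v) = s(φ x, φ y) := fun huv => by
    rw [← Sym2.map_mk, huv, Sym2.map_mk]
  have hends_iff : ∀ {u v w}, s(u, v) = s(x, y) →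
      (w = φ x ∨ w = φ y ↔ w = φ u ∨ w = φ v) :=
    fun huv => by rw [← Sym2.mem_iff, ← Sym2.mem_iff, hends huv]
  let P' : ∀ u v, H.Adj u v → G.Walk (φ u) (φ v) := fun u v huv =>
    if hs : s(u, v) = s(x, y) then Q.orient (φ u) (φ v) (hends hs)
    else P u v (by simpa [huv] using hs)
  refine ⟨φ, fun a => hts (hφ a), hinj, P', fun u v huv => ?_, fun u v huv w hw => ?_,
    fun u v huv w hw hwu hwv a => ?_, fun u v u' v' huv huv' hne w hw hw' => ?_⟩
  · by_cases hs : s(u, v) = s(x, y)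
    · simp only [P', dif_pos hs]; exact hQpath.orient _
    · simp only [P', dif_neg hs]; exact hpath u v _
  · by_cases hs : s(u, v) = s(x, y)
    · simp only [P', dif_pos hs] at hw; exact (hQ w (Q.support_orient_subset _ hw)).1
    · simp only [P', dif_neg hs] at hw; exact hts (hsupp u v _ w hw)
  · by_cases hs : s(u, v) = s(x, y)
    · simp only [P', dif_pos hs] at hw
      rintro rfl
      have := (hends_iff hs).1 ((hQ _ (Q.support_orient_subset _ hw)).2 (hφ a))
      tauto
    · simp only [P', dif_neg hs] at hw; exact hinner u v _ w hw hwu hwv a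
  · by_cases hs : s(u, v) = s(x, y) <;> by_cases hs' : s(u', v') = s(x, y)
    · exact absurd (hs.trans hs'.symm) hne
    · simp only [P', dif_pos hs, dif_neg hs'] at hw hw'
      exact (hends_iff hs).1 ((hQ w (Q.support_orient_subset _ hw)).2 (hsupp u' v' _ w hw'))
    · simp only [P', dif_neg hs, dif_pos hs'] at hw hw'
      by_contra! hwuv
      obtain ⟨a, rfl⟩ : ∃ a, φ a = w :=
        ((hQ w (Q.support_orient_subset _ hw')).2 (hsupp u v _ w hw)).elim
          (fun h => ⟨x, h.symm⟩) (fun h => ⟨y, h.symm⟩)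
      exact hinner u v _ _ hw hwuv.1 hwuv.2 a rfl
    · simp only [P', dif_neg hs, dif_neg hs'] at hw hw'
      exact hdisj u v u' v' _ _ hne w hw hw'

end TopMinor

section Mader

variable {V : Type} {G : SimpleGraph V}

noncomputable def degIn (G : SimpleGraph V) (S : Finset V) (v : V) : ℕ := #{u ∈ S | G.Adj v u}

lemma degIn_le_card (G : SimpleGraph V) (S : Finset V) (v : V) : degIn G S v ≤ #S :=
  card_filter_le _ _

lemma sum_degIn_eq_sum_degIn_erase (G : SimpleGraph V) {S : Finset V} {w : V} (hw : w ∈ S) :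
    ∑ v ∈ S, degIn G S v = ∑ v ∈ S.erase w, degIn G (S.erase w) v + 2 * degIn G S w := by
  have hdeg : ∀ v ∈ S.erase w,
      degIn G S v = degIn G (S.erase w) v + if G.Adj w v then 1 else 0 := by
    intro v hv
    unfold degIn
    rw [filter_erase]
    split_ifs with hwv
    · rw [card_erase_add_one (by simpa [hw] using hwv.symm)]
    · rw [erase_eq_of_notMem (by simpa [G.adj_comm] using fun _ => hwv), add_zero]
  have hcount : ∑ v ∈ S.erase w, (if G.Adj w v then 1 else 0) = degIn G S w := by
    rw [← card_filter, degIn, filter_erase, erase_eq_of_notMem (by simp)]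
  rw [← add_sum_erase _ _ hw, sum_congr rfl hdeg, sum_add_distrib, hcount]
  ring

noncomputable def boundaryIn (G : SimpleGraph V) (S U : Finset V) : Finset V :=
  {w ∈ S \ U | ∃ u ∈ U, G.Adj u w}

@[simp] lemma mem_boundaryIn {S U : Finset V} {w : V} :
    w ∈ boundaryIn G S U ↔ (w ∈ S ∧ w ∉ U) ∧ ∃ u ∈ U, G.Adj u w := by
  simp [boundaryIn]

lemma exists_walk_support_subset_of_connected_induce {s : Set V}
    (hs : (G.induce s).Connected) {a b : V} (ha : a ∈ s) (hb : b ∈ s) :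
    ∃ W : G.Walk a b, ∀ w ∈ W.support, w ∈ s := by
  suffices h : ∀ {u v : s}, (G.induce s).Walk u v →
      ∃ W : G.Walk u v, ∀ w ∈ W.support, w ∈ s from
    h (hs.preconnected ⟨a, ha⟩ ⟨b, hb⟩).some
  intro u v W
  induction W with
  | nil => exact ⟨.nil, by simp⟩
  | cons hux _ ih =>
    obtain ⟨W, hW⟩ := ih
    exact ⟨.cons (induce_adj.1 hux) W, by simpa using hW⟩

lemma isLinkedIn_boundaryIn {S U : Finset V} (hUS : U ⊆ S)
    (hU : (G.induce (U : Set V)).Connected) : IsLinkedIn G (boundaryIn G S U) S := by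
  intro p hp q hq
  simp only [mem_coe, mem_boundaryIn] at hp hq
  obtain ⟨⟨hpS, -⟩, a, haU, hap⟩ := hp
  obtain ⟨⟨hqS, -⟩, b, hbU, hbq⟩ := hq
  obtain ⟨Q, hQ⟩ := exists_walk_support_subset_of_connected_induce hU haU hbU
  refine ⟨(Walk.cons hap.symm Q).concat hbq, fun w hw => ?_⟩
  simp only [Walk.support_concat, Walk.support_cons, List.mem_append, List.mem_cons,
    List.not_mem_nil, or_false] at hw
  simp only [mem_coe, mem_boundaryIn]
  rcases hw with (rfl | hw) | rfl
  · exact ⟨hpS, fun _ => Or.inl rfl⟩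
  · exact ⟨hUS (hQ w hw), fun h => absurd (hQ w hw) h.1.2⟩
  · exact ⟨hqS, fun _ => Or.inr rfl⟩

/-- The sets `U` among which Mader's argument picks a largest one; the sum of degrees counts
each edge of `G[S \ U]` twice. -/
def IsMaderSet (G : SimpleGraph V) (d : ℕ) (S U : Finset V) : Prop :=
  U.Nonempty ∧ (G.induce (U : Set V)).Connected ∧
    2 * d * (#(S \ U) + 1) ≤ ∑ v ∈ S \ U, degIn G (S \ U) v + 2 * #(boundaryIn G S U)

lemma isMaderSet_singleton {d : ℕ} {S : Finset V} (hdeg : ∀ v ∈ S, 2 * d ≤ degIn G S v)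
    {v : V} (hv : v ∈ S) : IsMaderSet G d S {v} := by
  refine ⟨singleton_nonempty v, ?_, ?_⟩
  · rw [coe_singleton, induce_singleton_eq_top]
    exact connected_top
  have hbd : boundaryIn G S {v} = {u ∈ S | G.Adj v u} := by
    ext u
    simp only [mem_boundaryIn, mem_singleton, exists_eq_left, mem_filter]
    exact ⟨fun h => ⟨h.1.1, h.2⟩, fun h => ⟨⟨h.1, fun huv => G.ne_of_adj h.2 huv.symm⟩, h.2⟩⟩
  have hsum : 2 * d * #S ≤ ∑ u ∈ S, degIn G S u := by
    simpa [mul_comm] using sum_le_sum hdeg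
  rw [sdiff_singleton_eq_erase, hbd, ← degIn, ← sum_degIn_eq_sum_degIn_erase G hv,
    card_erase_add_one hv]
  exact hsum

lemma card_boundaryIn_add_degIn_le {S U : Finset V} {w : V} (hw : w ∈ boundaryIn G S U) :
    #(boundaryIn G S U) + degIn G (S \ U) w ≤
      #(boundaryIn G S (insert w U)) + 1 + degIn G (boundaryIn G S U) w := by
  set N := boundaryIn G S U
  set A : Finset V := {u ∈ S \ U | G.Adj w u}
  have hNS : N ⊆ S \ U := filter_subset _ _
  have hAN : A ∩ N = {u ∈ N | G.Adj w u} := by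
    ext u
    simp only [A, mem_inter, mem_filter]
    exact ⟨fun h => ⟨h.2, h.1.2⟩, fun h => ⟨⟨hNS h.1, h.2⟩, h.1⟩⟩
  have hsub : N.erase w ∪ A \ N ⊆ boundaryIn G S (insert w U) := by
    intro u hu
    simp only [N, A, mem_union, mem_erase, mem_sdiff, mem_filter, mem_boundaryIn,
      mem_insert] at hu ⊢
    rcases hu with ⟨huw, ⟨huS, huU⟩, x, hxU, hxu⟩ | ⟨⟨⟨huS, huU⟩, hwu⟩, -⟩
    · exact ⟨⟨huS, not_or.2 ⟨huw, huU⟩⟩, x, Or.inr hxU, hxu⟩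
    · exact ⟨⟨huS, not_or.2 ⟨(G.ne_of_adj hwu).symm, huU⟩⟩, w, Or.inl rfl, hwu⟩
  have hdisj : Disjoint (N.erase w) (A \ N) :=
    disjoint_left.2 fun u hu hu' => (mem_sdiff.1 hu').2 (mem_of_mem_erase hu)
  have hcard := card_le_card hsub
  rw [card_union_of_disjoint hdisj] at hcard
  have hA := card_sdiff_add_card_inter A N
  rw [hAN] at hA
  have hNw := card_erase_add_one hw
  change _ + #A ≤ _ + #{u ∈ N | G.Adj w u}
  omega

lemma le_degIn_of_not_isMaderSet_insert {d : ℕ} {S U : Finset V} {w : V}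
    (hU : IsMaderSet G d S U) (hw : w ∈ boundaryIn G S U)
    (hmax : ¬ IsMaderSet G d S (insert w U)) : d ≤ degIn G (boundaryIn G S U) w := by
  obtain ⟨-, hUconn, hbound⟩ := hU
  obtain ⟨⟨hwS, hwU⟩, u, huU, huw⟩ := mem_boundaryIn.1 hw
  have hconn : (G.induce (insert w U : Finset V)).Connected := by
    rw [coe_insert, Set.insert_eq, Set.union_comm]
    exact connected_induce_union hUconn.preconnected
      (by simp [Preconnected.of_subsingleton]) huU rfl huw
  have hbound' := not_le.1 fun h => hmax ⟨insert_nonempty w U, hconn, h⟩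
  have hwT : w ∈ S \ U := mem_sdiff.2 ⟨hwS, hwU⟩
  rw [sdiff_insert, card_erase_add_one hwT] at hbound'
  rw [sum_degIn_eq_sum_degIn_erase G hwT] at hbound
  have := card_boundaryIn_add_degIn_le hw
  linarith

lemma degIn_sdiff_eq_of_boundaryIn_eq_empty {S U : Finset V} (hU : boundaryIn G S U = ∅)
    {v : V} (hv : v ∈ S \ U) : degIn G (S \ U) v = degIn G S v := by
  unfold degIn
  congr 1
  ext u
  simp only [mem_filter, mem_sdiff]
  refine ⟨fun h => ⟨h.1.1, h.2⟩, fun h => ⟨⟨h.1, fun huU => ?_⟩, h.2⟩⟩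
  have : v ∈ boundaryIn G S U := mem_boundaryIn.2 ⟨mem_sdiff.1 hv, u, huU, h.2.symm⟩
  simp [hU] at this

theorem exists_isLinkedIn_of_two_mul_le_degIn {d : ℕ} (hd : 0 < d) {S : Finset V}
    (hS : S.Nonempty) (hdeg : ∀ v ∈ S, 2 * d ≤ degIn G S v) :
    ∃ N ⊆ S, N.Nonempty ∧ (∀ v ∈ N, d ≤ degIn G N v) ∧ IsLinkedIn G N S := by
  induction S using Finset.strongInduction with
  | H S ih =>
  obtain ⟨v, hv⟩ := hS
  obtain ⟨U, hUmem, hUmax⟩ := exists_max_image {U ∈ S.powerset | IsMaderSet G d S U} card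
    ⟨{v}, mem_filter.2 ⟨by simpa using hv, isMaderSet_singleton hdeg hv⟩⟩
  obtain ⟨hUS, hU⟩ := mem_filter.1 hUmem
  rw [mem_powerset] at hUS
  have hbS : boundaryIn G S U ⊆ S := fun w hw => (mem_boundaryIn.1 hw).1.1
  rcases (boundaryIn G S U).eq_empty_or_nonempty with hN | hN
  · have hT : (S \ U).Nonempty := by
      by_contra! hT
      have := hU.2.2
      simp [hT, hN] at this
      omega
    obtain ⟨N, hNT, hNne, hNdeg, hNlink⟩ := ih (S \ U) (sdiff_ssubset hUS hU.1) hT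
      fun w hw => degIn_sdiff_eq_of_boundaryIn_eq_empty hN hw ▸ hdeg w (mem_sdiff.1 hw).1
    exact ⟨N, hNT.trans sdiff_subset, hNne, hNdeg, hNlink.mono (coe_subset.2 sdiff_subset)⟩
  · refine ⟨_, hbS, hN, fun w hw => le_degIn_of_not_isMaderSet_insert hU hw fun hw' => ?_,
      isLinkedIn_boundaryIn hUS hU.2.1⟩
    have := hUmax _ (mem_filter.2 ⟨mem_powerset.2 (insert_subset (hbS hw) hUS), hw'⟩)
    rw [card_insert_of_notMem (mem_boundaryIn.1 hw).1.2] at this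
    omega

end Mader

theorem isTopMinorOn_of_le_degIn {α β : Type} [Finite α] {G : SimpleGraph β}
    (H : SimpleGraph α) {S : Finset β} (hS : S.Nonempty)
    (hdeg : ∀ v ∈ S, 2 ^ H.edgeSet.ncard * Nat.card α ≤ degIn G S v) :
    IsTopMinorOn H G S := by
  induction hn : H.edgeSet.ncard generalizing H S with
  | zero =>
    obtain rfl : H = ⊥ := edgeSet_eq_empty.1 ((Set.ncard_eq_zero).1 hn)
    obtain ⟨v, hv⟩ := hS
    have := Fintype.ofFinite α
    obtain ⟨f⟩ := Function.Embedding.nonempty_of_card_le (α := α) (β := S) (by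
      simpa [hn, Nat.card_eq_fintype_card] using (hdeg v hv).trans (degIn_le_card G S v))
    exact isTopMinorOn_bot (φ := fun a => (f a).1) (fun a => (f a).2)
      (Subtype.val_injective.comp f.injective)
  | succ n ih =>
    obtain ⟨x, y, hxy⟩ := ne_bot_iff_exists_adj.1
      (edgeSet_nonempty.1 (Set.nonempty_of_ncard_ne_zero (s := H.edgeSet) (by simp [hn])))
    have hn' : (H.deleteEdges {s(x, y)}).edgeSet.ncard = n := by
      rw [edgeSet_deleteEdges, Set.ncard_sdiff_singleton_of_mem (H.mem_edgeSet.2 hxy), hn,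
        Nat.add_sub_cancel]
    have : Nonempty α := ⟨x⟩
    have hd : 0 < 2 ^ n * Nat.card α := Nat.mul_pos (by positivity) Nat.card_pos
    obtain ⟨N, hNS, hNne, hNdeg, hNlink⟩ :=
      exists_isLinkedIn_of_two_mul_le_degIn hd hS fun v hv => by
        simpa [hn, pow_succ, mul_assoc, mul_comm, mul_left_comm] using hdeg v hv
    exact (ih _ hNne (hn' ▸ hNdeg) hn').of_deleteEdges hNlink (coe_subset.2 hNS)

section Cliques

variable {V : Type} {G : SimpleGraph V}

lemma card_cliques_mem_le (S : Finset V) (v : V) :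
    #(S.powerset.filter fun t : Finset V => G.IsClique (↑t : Set V) ∧ v ∈ t) ≤
      2 ^ degIn G S v := by
  rw [degIn, ← card_powerset]
  refine card_le_card_of_injOn (fun t : Finset V => t.erase v) (fun t ht => ?_)
    fun t ht t' ht' h => ?_
  · rw [mem_coe, mem_filter, mem_powerset] at ht
    obtain ⟨htS, htcl, hvt⟩ := ht
    rw [mem_coe, mem_powerset]
    intro u hu
    obtain ⟨huv, hut⟩ := mem_erase.1 hu
    exact mem_filter.2 ⟨htS hut, htcl hvt hut (Ne.symm huv)⟩
  · rw [mem_coe, mem_filter] at ht ht'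
    rw [← insert_erase ht.2.2, ← insert_erase ht'.2.2]
    exact congrArg (insert v) h

lemma card_cliques_le_of_forall_exists_degIn_lt {D : ℕ}
    (hlow : ∀ S : Finset V, S.Nonempty → ∃ v ∈ S, degIn G S v < D) (S : Finset V) :
    #(S.powerset.filter fun t : Finset V => t.Nonempty ∧ G.IsClique (↑t : Set V)) ≤
      2 ^ D * #S := by
  induction S using Finset.strongInduction with
  | H S ih =>
  rcases S.eq_empty_or_nonempty with rfl | hS
  · simp
  obtain ⟨v, hv, hvD⟩ := hlow S hS
  set C := S.powerset.filter fun t : Finset V => t.Nonempty ∧ G.IsClique (↑t : Set V)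
  have hwith : #{t ∈ C | v ∈ t} ≤ 2 ^ D := by
    refine le_trans (card_le_card fun t ht => ?_) ((card_cliques_mem_le S v).trans
      (Nat.pow_le_pow_right two_pos hvD.le))
    simp only [C, mem_filter] at ht ⊢
    exact ⟨ht.1.1, ht.1.2.2, ht.2⟩
  have hwithout : #{t ∈ C | v ∉ t} ≤ 2 ^ D * #(S.erase v) := by
    refine le_trans (card_le_card fun t ht => ?_) (ih _ (erase_ssubset hv))
    simp only [C, mem_filter, mem_powerset] at ht ⊢
    exact ⟨subset_erase.2 ⟨ht.1.1, ht.2⟩, ht.1.2⟩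
  rw [← card_filter_add_card_filter_not (fun t => v ∈ t), ← card_erase_add_one hv]
  linarith

end Cliques

/-- `H`-topological-minor-free graphs contain a linear number of cliques. -/
theorem statement5 {W : Type} [Fintype W] (H : SimpleGraph W) :
    ∃ c : ℕ, ∀ (V : Type) [Fintype V] (G : SimpleGraph V),
      ¬ IsTopMinor H G →
      {s : Finset V | s.Nonempty ∧ G.IsClique (↑s : Set V)}.ncard ≤ c * Fintype.card V := by
  refine ⟨2 ^ (2 ^ H.edgeSet.ncard * Nat.card W), fun V _ G hfree => ?_⟩
  have hlow : ∀ S : Finset V, S.Nonempty →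
      ∃ v ∈ S, degIn G S v < 2 ^ H.edgeSet.ncard * Nat.card W := by
    intro S hS
    by_contra! hdeg
    exact hfree ((isTopMinorOn_of_le_degIn H hS hdeg).mono (Set.subset_univ _))
  have hcliques : {s : Finset V | s.Nonempty ∧ G.IsClique (↑s : Set V)} =
      ↑(univ.powerset.filter fun t : Finset V => t.Nonempty ∧ G.IsClique (↑t : Set V)) := by
    ext
    simp
  rw [hcliques, Set.ncard_coe_finset]
  exact card_cliques_le_of_forall_exists_degIn_lt hlow univ

end Paper
end

section
/- Let G be a finite simple graph and let A ⊆ E(H(G)) be a well-linked set of hyperedges of the support hypergraph H(G). Then for every two vertices u, v ∈ bd(A) there exists a path from u to v in G all of whose edges correspond to hyperedges in A and all of whose internal vertices lie in int(A). -/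
/-!
Let `R` be the set of vertices reachable from `u` by walks whose edges come from `A` and whose
inner vertices lie in `int(A)`. If `v ∉ R`, split `A` into the hyperedges lying inside `R` and the
rest. A vertex shared by the two parts cannot be interior (the walk could be continued through it),
so both parts have their boundary inside `bd(A)`; the first misses `v` and the second misses `u`.
Both parts then have boundary smaller than `λ(A)`, contradicting well-linkedness.
-/

open scoped Classical

namespace Paper

variable {V : Type} {E : Type}

section Hypergraph

variable {F : E → Finset V} {ground A B : Finset E}

theorem mem_Vs {x : V} : x ∈ Vs F A ↔ ∃ a ∈ A, x ∈ F a := Finset.mem_biUnion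

theorem Vs_mono (h : B ⊆ A) : Vs F B ⊆ Vs F A := Finset.biUnion_subset_biUnion_of_subset_left _ h

theorem bdIn_subset_bdIn (hBA : B ⊆ A) (h : Vs F B ∩ Vs F (A \ B) ⊆ bdIn F ground A) :
    bdIn F ground B ⊆ bdIn F ground A := by
  intro x hx
  obtain ⟨hxB, hxout⟩ := Finset.mem_inter.1 hx
  obtain ⟨e, he, hxe⟩ := mem_Vs.1 hxout
  rw [Finset.mem_sdiff] at he
  by_cases heA : e ∈ A
  · exact h (Finset.mem_inter.2 ⟨hxB, mem_Vs.2 ⟨e, Finset.mem_sdiff.2 ⟨heA, he.2⟩, hxe⟩⟩)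
  · exact Finset.mem_inter.2 ⟨Vs_mono hBA hxB, mem_Vs.2 ⟨e, Finset.mem_sdiff.2 ⟨he.1, heA⟩, hxe⟩⟩

theorem lamIn_lt_lamIn {w : V} (h : bdIn F ground B ⊆ bdIn F ground A)
    (hwA : w ∈ bdIn F ground A) (hwB : w ∉ bdIn F ground B) :
    lamIn F ground B < lamIn F ground A :=
  Finset.card_lt_card ((Finset.ssubset_iff_of_subset h).2 ⟨w, hwA, hwB⟩)

theorem WellLinkedIn.le_or_le (hA : WellLinkedIn F ground A) (hBA : B ⊆ A) :
    lamIn F ground A ≤ lamIn F ground B ∨ lamIn F ground A ≤ lamIn F ground (A \ B) :=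
  hA B (A \ B) (Finset.union_sdiff_of_subset hBA) (Finset.inter_sdiff_self B A)

theorem WellLinkedIn.mem_of_closed (hA : WellLinkedIn F ground A) {u v : V}
    (hu : u ∈ bdIn F ground A) (hv : v ∈ bdIn F ground A) {S : Set V} (huS : u ∈ S)
    (hS : ∀ a ∈ A, ∀ x ∈ F a, x ∈ S → (x = u ∨ x ∈ intIn F ground A) → ∀ y ∈ F a, y ∈ S) :
    v ∈ S := by
  by_contra hvS
  set B := A.filter fun a => ∀ x ∈ F a, x ∈ S
  have hBA : B ⊆ A := Finset.filter_subset _ _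
  have mem_B {a : E} (ha : a ∈ A) {x : V} (hxa : x ∈ F a) (hxS : x ∈ S)
      (hx : x = u ∨ x ∈ intIn F ground A) : a ∈ B :=
    Finset.mem_filter.2 ⟨ha, hS a ha x hxa hxS hx⟩
  have hVsB {x : V} (hx : x ∈ Vs F B) : x ∈ S := by
    obtain ⟨b, hb, hxb⟩ := mem_Vs.1 hx
    exact (Finset.mem_filter.1 hb).2 x hxb
  have hcut : Vs F B ∩ Vs F (A \ B) ⊆ bdIn F ground A := by
    intro x hx
    obtain ⟨hxB, hxAB⟩ := Finset.mem_inter.1 hx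
    obtain ⟨a, ha, hxa⟩ := mem_Vs.1 hxAB
    obtain ⟨haA, haB⟩ := Finset.mem_sdiff.1 ha
    by_contra hxbd
    exact haB (mem_B haA hxa (hVsB hxB) (Or.inr (Finset.mem_sdiff.2 ⟨Vs_mono hBA hxB, hxbd⟩)))
  have huB : u ∉ bdIn F ground (A \ B) := fun hu' => by
    obtain ⟨a, ha, hua⟩ := mem_Vs.1 (Finset.mem_inter.1 hu').1
    obtain ⟨haA, haB⟩ := Finset.mem_sdiff.1 ha
    exact haB (mem_B haA hua huS (Or.inl rfl))
  have hvB : v ∉ bdIn F ground B := fun hv' => hvS (hVsB (Finset.mem_inter.1 hv').1)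
  have hcut' : Vs F (A \ B) ∩ Vs F (A \ (A \ B)) ⊆ bdIn F ground A := by
    rwa [Finset.sdiff_sdiff_eq_self hBA, Finset.inter_comm]
  rcases hA.le_or_le hBA with h | h
  · exact h.not_gt (lamIn_lt_lamIn (bdIn_subset_bdIn hBA hcut) hv hvB)
  · exact h.not_gt (lamIn_lt_lamIn (bdIn_subset_bdIn Finset.sdiff_subset hcut') hu huB)

end Hypergraph

theorem IsSupport.adj_of_mem {G : SimpleGraph V} {F : E → Finset V} (hF : IsSupport G F)
    {a : E} {x y : V} (hx : x ∈ F a) (hy : y ∈ F a) (hxy : x ≠ y) :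
    G.Adj x y ∧ ∀ z, z ∈ F a ↔ z ∈ s(x, y) := by
  rcases hF.1 a with ⟨w, hw⟩ | ⟨b, c, hbc, hw⟩
  · simp only [hw, Finset.mem_singleton] at hx hy
    exact absurd (hx.trans hy.symm) hxy
  · simp only [hw, Finset.mem_insert, Finset.mem_singleton] at hx hy ⊢
    rcases hx with rfl | rfl <;> rcases hy with rfl | rfl
    · exact absurd rfl hxy
    · exact ⟨hbc, by simp⟩
    · exact ⟨hbc.symm, by simp [or_comm]⟩
    · exact absurd rfl hxy

end Paper

namespace SimpleGraph.Walk

variable {V : Type*} {G : SimpleGraph V} {u v w : V}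

def Confined (D : Set (Sym2 V)) (I : Set V) (p : G.Walk u v) : Prop :=
  (∀ d ∈ p.edges, d ∈ D) ∧ ∀ w ∈ p.support, w ≠ u → w ≠ v → w ∈ I

variable {D : Set (Sym2 V)} {I : Set V}

theorem confined_nil : (nil : G.Walk u u).Confined D I :=
  ⟨by simp, fun _ hw hwu _ => absurd (List.mem_singleton.1 hw) hwu⟩

theorem Confined.concat {p : G.Walk u v} (hp : p.Confined D I) (hv : v = u ∨ v ∈ I)
    (h : G.Adj v w) (hD : s(v, w) ∈ D) : (p.concat h).Confined D I := by
  refine ⟨fun d hd => ?_, fun x hx hxu hxw => ?_⟩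
  · rw [edges_concat, List.concat_eq_append, List.mem_append, List.mem_singleton] at hd
    rcases hd with hd | rfl
    exacts [hp.1 d hd, hD]
  · rw [support_concat, List.mem_append, List.mem_singleton] at hx
    rcases hx with hx | rfl
    · by_cases hxv : x = v
      · subst hxv
        exact hv.resolve_left hxu
      · exact hp.2 x hx hxu hxv
    · exact absurd rfl hxw

theorem Confined.bypass [DecidableEq V] {p : G.Walk u v} (hp : p.Confined D I) :
    p.bypass.Confined D I :=
  ⟨fun d hd => hp.1 d (edges_bypass_subset_edges p hd),
    fun x hx => hp.2 x (support_bypass_subset_support p hx)⟩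

end SimpleGraph.Walk

namespace Paper

open SimpleGraph.Walk in
theorem statement6_general {V E : Type} [Fintype E]
    (G : SimpleGraph V) (F : E → Finset V) (hF : IsSupport G F)
    (A : Finset E) (hA : WellLinkedIn F Finset.univ A)
    (u v : V) (hu : u ∈ bdIn F Finset.univ A) (hv : v ∈ bdIn F Finset.univ A) :
    ∃ p : G.Walk u v, p.IsPath ∧
      (∀ d ∈ p.edges, ∃ a ∈ A, ∀ x : V, x ∈ F a ↔ x ∈ d) ∧
      (∀ w ∈ p.support, w ≠ u → w ≠ v → w ∈ intIn F Finset.univ A) := by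
  set D : Set (Sym2 V) := {d | ∃ a ∈ A, ∀ x : V, x ∈ F a ↔ x ∈ d}
  set I : Set V := ↑(intIn F Finset.univ A)
  set R : Set V := {x | ∃ p : G.Walk u x, p.Confined D I}
  have hR_closed : ∀ a ∈ A, ∀ x ∈ F a, x ∈ R → (x = u ∨ x ∈ intIn F Finset.univ A) →
      ∀ y ∈ F a, y ∈ R := by
    rintro a ha x hxa ⟨p, hp⟩ hx y hya
    by_cases hxy : x = y
    · exact hxy ▸ ⟨p, hp⟩
    obtain ⟨hadj, hFa⟩ := hF.adj_of_mem hxa hya hxy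
    exact ⟨p.concat hadj, hp.concat hx hadj ⟨a, ha, hFa⟩⟩
  obtain ⟨p, hp⟩ := hA.mem_of_closed hu hv (S := R) ⟨nil, confined_nil⟩ hR_closed
  exact ⟨p.bypass, p.bypass_isPath, hp.bypass.1, hp.bypass.2⟩

/-- outside paths from well-linked sets in the support hypergraph. -/
theorem statement6 {V E : Type} [Fintype V] [Fintype E]
    (G : SimpleGraph V) (F : E → Finset V) (hF : IsSupport G F)
    (A : Finset E) (hA : WellLinkedIn F Finset.univ A)
    (u v : V) (hu : u ∈ bdIn F Finset.univ A) (hv : v ∈ bdIn F Finset.univ A) :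
    ∃ p : G.Walk u v, p.IsPath ∧
      (∀ d ∈ p.edges, ∃ a ∈ A, ∀ x : V, x ∈ F a ↔ x ∈ d) ∧
      (∀ w ∈ p.support, w ≠ u → w ≠ v → w ∈ intIn F Finset.univ A) :=
  statement6_general G F hF A hA u v hu hv

end Paper
end

section
/- Let Π be a parameterized graph problem and let G1, G2 be boundaried graphs that are non-monotone for Π and satisfy G1 ≡_Π G2. Then there is exactly one transposition constant from G1 to G2, i.e., exactly one Δ ∈ ℤ such that for every boundaried graph F and every k ∈ ℤ, (F ⊕ G1, k) ∈ Π if and only if (F ⊕ G2, k + Δ) ∈ Π. -/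
/-!
Two distinct transposition constants `Δ ≠ Δ'` from `G1` to `G2` make every `k ↦ Π(F ⊕ G2, k)`
periodic with period `Δ - Δ' ≠ 0`. Every parameter is then equivalent to a negative one, where `Π`
does not depend on the graph, so `G2` would be monotone.
-/

open scoped Classical

namespace Paper

/-- A finite simple graph on the vertex universe `ℕ ⊕ ℕ` (used for glued graphs). -/
structure PGraph where
  verts : Finset (ℕ ⊕ ℕ)
  Adj : (ℕ ⊕ ℕ) → (ℕ ⊕ ℕ) → Prop
  symm : ∀ u v, Adj u v → Adj v u
  loopless : ∀ u, ¬ Adj u u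
  supp : ∀ u v, Adj u v → u ∈ verts ∧ v ∈ verts

/-- A boundaried graph: a finite simple graph on the vertex universe `ℕ`,
together with a boundary set and an injective labeling of the boundary by
positive integers. -/
structure BGraph where
  verts : Finset ℕ
  Adj : ℕ → ℕ → Prop
  symm : ∀ u v, Adj u v → Adj v u
  loopless : ∀ u, ¬ Adj u u
  supp : ∀ u v, Adj u v → u ∈ verts ∧ v ∈ verts
  bnd : Finset ℕ
  bnd_sub : bnd ⊆ verts
  lab : ℕ → ℕ
  lab_inj : Set.InjOn lab ↑bnd
  lab_pos : ∀ b ∈ bnd, 1 ≤ lab b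

/-- The label set of a boundaried graph. -/
noncomputable def BGraph.labels (X : BGraph) : Finset ℕ := X.bnd.image X.lab

/-- Where a vertex `x` of `X` goes in the glued graph `glue X Y`: if `x` is a
boundary vertex of `X` whose label is also a label of `Y`, it is identified
with the boundary vertex of `Y` carrying the same label; otherwise it is kept
(on the left side of the disjoint union). -/
noncomputable def glueMap (X Y : BGraph) (x : ℕ) : ℕ ⊕ ℕ :=
  if h : x ∈ X.bnd ∧ ∃ y ∈ Y.bnd, Y.lab y = X.lab x then Sum.inr h.2.choose
  else Sum.inl x

/-- The glued graph `X ⊕ Y`: the disjoint union of `X` and `Y` in which, for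
each common label, the boundary vertices of `X` and `Y` carrying that label are
identified. -/
noncomputable def glue (X Y : BGraph) : PGraph where
  verts := X.verts.image (glueMap X Y) ∪ Y.verts.image Sum.inr
  Adj u v :=
    (u ≠ v ∧ ∃ a b, X.Adj a b ∧ glueMap X Y a = u ∧ glueMap X Y b = v) ∨
    (∃ a b, Y.Adj a b ∧ Sum.inr a = u ∧ Sum.inr b = v)
  symm := by
    rintro u v (⟨hne, a, b, hab, ha, hb⟩ | ⟨a, b, hab, ha, hb⟩)
    · exact Or.inl ⟨hne.symm, b, a, X.symm a b hab, hb, ha⟩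
    · exact Or.inr ⟨b, a, Y.symm a b hab, hb, ha⟩
  loopless := by
    rintro u (⟨hne, _⟩ | ⟨a, b, hab, ha, hb⟩)
    · exact hne rfl
    · have hba : a = b := Sum.inr_injective (ha.trans hb.symm)
      exact Y.loopless b (hba ▸ hab)
  supp := by
    rintro u v (⟨hne, a, b, hab, rfl, rfl⟩ | ⟨a, b, hab, rfl, rfl⟩)
    · obtain ⟨ha, hb⟩ := X.supp a b hab
      exact ⟨Finset.mem_union_left _ (Finset.mem_image_of_mem _ ha),
             Finset.mem_union_left _ (Finset.mem_image_of_mem _ hb)⟩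
    · obtain ⟨ha, hb⟩ := Y.supp a b hab
      exact ⟨Finset.mem_union_right _ (Finset.mem_image_of_mem _ ha),
             Finset.mem_union_right _ (Finset.mem_image_of_mem _ hb)⟩

/-- A parameterized graph problem: membership for negative parameter values is
uniform. -/
def ParamProblem (P : PGraph → ℤ → Prop) : Prop :=
  (∀ G k, k < 0 → P G k) ∨ (∀ G k, k < 0 → ¬ P G k)

/-- `Δ` is a transposition constant from `X` to `Y` for the problem `P`. -/
def TransConst (P : PGraph → ℤ → Prop) (X Y : BGraph) (Δ : ℤ) : Prop :=
  ∀ (F : BGraph) (k : ℤ), P (glue F X) k ↔ P (glue F Y) (k + Δ)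

/-- A boundaried graph is monotone for `P`. -/
def MonotonePb (P : PGraph → ℤ → Prop) (X : BGraph) : Prop :=
  (∀ (F : BGraph) (k : ℤ), P (glue F X) k) ∨ (∀ (F : BGraph) (k : ℤ), ¬ P (glue F X) k)

/-- The equivalence `X ≡_Π Y`. -/
def EquivPb (P : PGraph → ℤ → Prop) (X Y : BGraph) : Prop :=
  X.labels = Y.labels ∧ ∃ Δ : ℤ, TransConst P X Y Δ

/-- The equivalence `X ≡_𝒢 Y` for a class `𝒢` of graphs. -/
def EquivCls (𝒢 : Set PGraph) (X Y : BGraph) : Prop :=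
  X.labels = Y.labels ∧ ∀ F : BGraph, glue F X ∈ 𝒢 ↔ glue F Y ∈ 𝒢

theorem _root_.Function.Periodic.exists_neg_eq {α : Type*} {f : ℤ → α} {c : ℤ}
    (hf : Function.Periodic f c) (hc : c ≠ 0) (m : ℤ) : ∃ m' < 0, f m' = f m := by
  -- shifting by `-(|m| + 1) * sign c` periods moves `m` down by at least `|m| + 1`
  refine ⟨m + -(|m| + 1) * c.sign * c, ?_, hf.int_mul _ m⟩
  have hshift : (|m| + 1) * c.sign * c = (|m| + 1) * |c| := by
    rw [mul_assoc, Int.sign_mul_self_eq_abs]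
  have hc' : 1 ≤ |c| := Int.one_le_abs hc
  nlinarith [le_abs_self m, abs_nonneg m]

theorem TransConst.periodic_sub {P : PGraph → ℤ → Prop} {X Y : BGraph} {Δ Δ' : ℤ}
    (hΔ : TransConst P X Y Δ) (hΔ' : TransConst P X Y Δ') (F : BGraph) :
    Function.Periodic (P (glue F Y)) (Δ - Δ') := fun m => by
  have h := (hΔ F (m - Δ')).symm.trans (hΔ' F (m - Δ'))
  rw [sub_add_cancel, sub_add_eq_add_sub, add_sub_assoc] at h
  exact propext h

theorem ParamProblem.monotonePb_of_periodic {P : PGraph → ℤ → Prop} (hP : ParamProblem P)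
    {Y : BGraph} {c : ℤ} (hc : c ≠ 0) (hY : ∀ F, Function.Periodic (P (glue F Y)) c) :
    MonotonePb P Y := by
  rcases hP with hneg | hneg
  · refine Or.inl fun F k => ?_
    obtain ⟨k', hk', hk⟩ := (hY F).exists_neg_eq hc k
    exact hk ▸ hneg _ _ hk'
  · refine Or.inr fun F k => ?_
    obtain ⟨k', hk', hk⟩ := (hY F).exists_neg_eq hc k
    exact hk ▸ hneg _ _ hk'

theorem TransConst.eq_of_not_monotonePb {P : PGraph → ℤ → Prop} (hP : ParamProblem P)
    {X Y : BGraph} (hY : ¬ MonotonePb P Y) {Δ Δ' : ℤ}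
    (hΔ : TransConst P X Y Δ) (hΔ' : TransConst P X Y Δ') : Δ' = Δ := by
  by_contra hne
  exact hY (hP.monotonePb_of_periodic (sub_ne_zero.2 (Ne.symm hne)) (hΔ.periodic_sub hΔ'))

theorem statement9_general (P : PGraph → ℤ → Prop) (hP : ParamProblem P)
    (G1 G2 : BGraph) (h2 : ¬ MonotonePb P G2)
    (heq : EquivPb P G1 G2) :
    ∃! Δ : ℤ, TransConst P G1 G2 Δ := by
  obtain ⟨-, Δ, hΔ⟩ := heq
  exact ⟨Δ, hΔ, fun _ hΔ' => hΔ.eq_of_not_monotonePb hP h2 hΔ'⟩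

/-- uniqueness of the transposition constant between non-monotone
equivalent boundaried graphs. -/
theorem statement9 (P : PGraph → ℤ → Prop) (hP : ParamProblem P)
    (G1 G2 : BGraph) (h1 : ¬ MonotonePb P G1) (h2 : ¬ MonotonePb P G2)
    (heq : EquivPb P G1 G2) :
    ∃! Δ : ℤ, TransConst P G1 G2 Δ :=
  statement9_general P hP G1 G2 h2 heq

end Paper
end

section
/- Let 𝒢 be a class of finite graphs and let Π be a parameterized graph problem. Then every equivalence class C of the relation ≡_{Π,𝒢} on boundaried graphs contains a boundaried graph G0 such that for every G ∈ C there exists an integer Δ ≤ 0 that is a transposition constant from G to G0, i.e., for every boundaried graph F and every k ∈ ℤ, (F ⊕ G, k) ∈ Π if and only if (F ⊕ G0, k + Δ) ∈ Π. -/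
open scoped Classical

namespace Paper

/-! Transposition constants compose like differences: `TransConst P X Y Δ` says that `Y`
behaves like `X` with the parameter shifted by `Δ`. If `X` is not monotone, the
uniform behaviour of `P` at negative parameters bounds these shifts from below, so
a least one is attained inside the class and its witness is the representative; a
monotone `X` admits every shift and is its own representative. -/

section TransConst

variable {P : PGraph → ℤ → Prop} {X Y Z : BGraph} {a b : ℤ}

theorem TransConst.refl (P : PGraph → ℤ → Prop) (X : BGraph) : TransConst P X X 0 := by
  intro F k
  rw [add_zero]

theorem TransConst.symm (h : TransConst P X Y a) : TransConst P Y X (-a) := by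
  intro F k
  simpa [sub_eq_add_neg] using (h F (k - a)).symm

theorem TransConst.trans (hXY : TransConst P X Y a) (hYZ : TransConst P Y Z b) :
    TransConst P X Z (a + b) := by
  intro F k
  rw [← add_assoc]
  exact (hXY F k).trans (hYZ F (k + a))

theorem MonotonePb.transConst_self (h : MonotonePb P X) (d : ℤ) : TransConst P X X d := by
  intro F k
  rcases h with h | h
  · exact iff_of_true (h F k) (h F (k + d))
  · exact iff_of_false (h F k) (h F (k + d))

theorem MonotonePb.transConst_to_self (h : MonotonePb P X) (hXY : TransConst P X Y a) :
    TransConst P Y X 0 := by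
  simpa using hXY.symm.trans (h.transConst_self a)

/-- A non-monotone `X` has an instance `(F ⊕ X, k)` on the side of `P` opposite to
the one `P` takes at all negative parameters; shifting it below `0` is impossible. -/
theorem bddBelow_transConst (hP : ParamProblem P) (hX : ¬ MonotonePb P X) :
    BddBelow {d | ∃ Y, TransConst P X Y d} := by
  simp only [MonotonePb, not_or, not_forall] at hX
  obtain ⟨⟨F₁, k₁, h₁⟩, ⟨F₂, k₂, h₂⟩⟩ := hX
  rcases hP with hneg | hneg
  · refine ⟨-k₁, fun d ⟨Y, hd⟩ => ?_⟩
    by_contra! hlt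
    exact h₁ ((hd F₁ k₁).mpr (hneg _ _ (by linarith)))
  · refine ⟨-k₂, fun d ⟨Y, hd⟩ => ?_⟩
    by_contra! hlt
    exact hneg _ _ (by linarith) ((hd F₂ k₂).mp (not_not.mp h₂))

end TransConst

/-- every equivalence class of `≡_{Π,𝒢}` has a progressive
representative. -/
theorem statement11 (P : PGraph → ℤ → Prop) (hP : ParamProblem P)
    (𝒢 : Set PGraph) (C : Set BGraph)
    (hC : ∃ X : BGraph, C = {Y | EquivPb P X Y ∧ EquivCls 𝒢 X Y}) :
    ∃ G0 ∈ C, ∀ G ∈ C, ∃ Δ : ℤ, Δ ≤ 0 ∧ TransConst P G G0 Δ := by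
  obtain ⟨X, rfl⟩ := hC
  set C := {Y | EquivPb P X Y ∧ EquivCls 𝒢 X Y}
  have hXC : X ∈ C := ⟨⟨rfl, 0, TransConst.refl P X⟩, rfl, fun _ => Iff.rfl⟩
  by_cases hX : MonotonePb P X
  · refine ⟨X, hXC, fun G hG => ?_⟩
    obtain ⟨Δ, hΔ⟩ := hG.1.2
    exact ⟨0, le_rfl, hX.transConst_to_self hΔ⟩
  obtain ⟨_, hbdd⟩ := bddBelow_transConst hP hX
  obtain ⟨d₀, ⟨G0, hG0C, hG0⟩, hmin⟩ := Int.exists_least_of_bdd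
    (P := fun d => ∃ G ∈ C, TransConst P X G d)
    ⟨_, fun d ⟨G, _, hd⟩ => hbdd ⟨G, hd⟩⟩ ⟨0, X, hXC, TransConst.refl P X⟩
  refine ⟨G0, hG0C, fun G hG => ?_⟩
  obtain ⟨Δ, hΔ⟩ := hG.1.2
  exact ⟨-Δ + d₀, by linarith [hmin Δ ⟨G, hG, hΔ⟩], hΔ.symm.trans hG0⟩

end Paper
end
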